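/- arXiv:2212.13522 — 9 statements merged into one kernel-verified Lean document; each statement's English description precedes it below -/
import Mathlib

section
/- Let μ be a log-concave Borel measure on ℝⁿ (i.e., μ((1−λ)A + λB) ≥ μ(A)^{1−λ} μ(B)^{λ} for all compact sets A, B and λ ∈ [0,1]). Let A and B be convex bodies in ℝⁿ and let t > 0. Then μ(A)·μ(A + B + tB) ≤ μ(A + B)·μ(A + tB). -/
open Pointwise MeasureTheory Set

theorem stmt0 {n : ℕ} (μ : Measure (EuclideanSpace ℝ (Fin n)))
    (hlc : ∀ A B : Set (EuclideanSpace ℝ (Fin n)), IsCompact A → IsCompact B →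
      A.Nonempty → B.Nonempty →
      ∀ l : ℝ, l ∈ Set.Icc (0:ℝ) 1 →
        μ A ^ (1 - l) * μ B ^ l ≤ μ ((1 - l) • A + l • B))
    (A B : Set (EuclideanSpace ℝ (Fin n)))
    (hA : IsCompact A) (hAc : Convex ℝ A) (hAi : (interior A).Nonempty)
    (hB : IsCompact B) (hBc : Convex ℝ B) (hBi : (interior B).Nonempty)
    (t : ℝ) (ht : 0 < t) :
    μ A * μ (A + B + t • B) ≤ μ (A + B) * μ (A + t • B) := by
  have ht1 : (0:ℝ) < t + 1 := by linarith
  set l : ℝ := t / (t + 1) with hl_def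
  have hl0 : 0 < l := by positivity
  have hl1 : l < 1 := by rw [hl_def, div_lt_one ht1]; linarith
  have hl : l ∈ Set.Icc (0:ℝ) 1 := ⟨hl0.le, hl1.le⟩
  have hl' : (1 - l) ∈ Set.Icc (0:ℝ) 1 := ⟨by linarith, by linarith⟩
  set C : Set (EuclideanSpace ℝ (Fin n)) := A + (t + 1) • B with hC_def
  have hCcomp : IsCompact C := hA.add (hB.smul _)
  -- C equals the set in the goal
  have hCeq : C = A + B + t • B := by
    rw [hC_def, show (t + 1 : ℝ) = 1 + t from add_comm _ _,
      hBc.add_smul zero_le_one ht.le, one_smul, ← add_assoc]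
  -- decomposition identities
  have hlt : l * (t + 1) = t := by rw [hl_def]; field_simp
  have hlt' : (1 - l) * (t + 1) = 1 := by rw [hl_def]; field_simp; ring
  have h1 : (1 - l) • A + l • C = A + t • B := by
    rw [hC_def, smul_add, smul_smul, hlt, ← add_assoc, ← hAc.add_smul (by linarith) hl0.le]
    norm_num
  have h2 : (1 - (1 - l)) • A + (1 - l) • C = A + B := by
    rw [hC_def, smul_add, smul_smul, hlt', ← add_assoc, sub_sub_cancel,
      ← hAc.add_smul hl0.le (by linarith)]
    norm_num
  have key1 : μ A ^ (1 - l) * μ C ^ l ≤ μ (A + t • B) := by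
    have := hlc A C hA hCcomp (hAi.mono interior_subset) ((hAi.mono interior_subset).add ((hBi.mono interior_subset).smul_set)) l hl
    rwa [h1] at this
  have key2 : μ A ^ l * μ C ^ (1 - l) ≤ μ (A + B) := by
    have := hlc A C hA hCcomp (hAi.mono interior_subset) ((hAi.mono interior_subset).add ((hBi.mono interior_subset).smul_set)) (1 - l) hl'
    rw [h2] at this
    simpa using this
  rw [← hCeq]
  by_cases hA0 : μ A = 0
  · simp [hA0]
  by_cases hC0 : μ C = 0
  · simp [hC0]
  have hApow_ne : ∀ r : ℝ, 0 < r → μ A ^ r ≠ 0 := fun r hr => by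
    simp only [ne_eq, ENNReal.rpow_eq_zero_iff, not_or, not_and]
    exact ⟨fun h => absurd h hA0, fun _ => by linarith⟩
  have hCpow_ne : ∀ r : ℝ, 0 < r → μ C ^ r ≠ 0 := fun r hr => by
    simp only [ne_eq, ENNReal.rpow_eq_zero_iff, not_or, not_and]
    exact ⟨fun h => absurd h hC0, fun _ => by linarith⟩
  by_cases hAt : μ A = ⊤
  · have hAB : μ (A + B) = ⊤ := by
      rw [eq_top_iff]
      calc (⊤ : ENNReal) = μ A ^ l * μ C ^ (1 - l) := by
            rw [hAt, ENNReal.top_rpow_of_pos hl0, ENNReal.top_mul (hCpow_ne _ (by linarith))]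
        _ ≤ μ (A + B) := key2
    have hAtB : μ (A + t • B) = ⊤ := by
      rw [eq_top_iff]
      calc (⊤ : ENNReal) = μ A ^ (1 - l) * μ C ^ l := by
            rw [hAt, ENNReal.top_rpow_of_pos (by linarith), ENNReal.top_mul (hCpow_ne _ (by linarith))]
        _ ≤ μ (A + t • B) := key1
    rw [hAB, hAtB]
    simp
  by_cases hCt : μ C = ⊤
  · have hAB : μ (A + B) = ⊤ := by
      rw [eq_top_iff]
      calc (⊤ : ENNReal) = μ A ^ l * μ C ^ (1 - l) := by
            rw [hCt, ENNReal.top_rpow_of_pos (by linarith), ENNReal.mul_top (hApow_ne _ (by linarith))]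
        _ ≤ μ (A + B) := key2
    have hAtB : μ (A + t • B) = ⊤ := by
      rw [eq_top_iff]
      calc (⊤ : ENNReal) = μ A ^ (1 - l) * μ C ^ l := by
            rw [hCt, ENNReal.top_rpow_of_pos hl0, ENNReal.mul_top (hApow_ne _ (by linarith))]
        _ ≤ μ (A + t • B) := key1
    rw [hAB, hAtB]
    simp
  calc μ A * μ C = (μ A ^ l * μ C ^ (1 - l)) * (μ A ^ (1 - l) * μ C ^ l) := by
        rw [mul_mul_mul_comm, ← ENNReal.rpow_add _ _ hA0 hAt,
          ← ENNReal.rpow_add _ _ hC0 hCt]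
        norm_num
    _ ≤ μ (A + B) * μ (A + t • B) := mul_le_mul' key2 key1
end

section
/- For every n ≥ 2, the standard Gaussian measure γₙ on ℝⁿ is neither submodular nor supermodular on symmetric convex bodies: there exist symmetric convex bodies A, B, C with γₙ(A + B + C) + γₙ(A) > γₙ(A + B) + γₙ(A + C), and there exist symmetric convex bodies A', B', C' with γₙ(A' + B' + C') + γₙ(A') < γₙ(A' + B') + γₙ(A' + C'). -/
open Pointwise MeasureTheory Set Metric Module Real

/-! Take `A = B = C = B_r`, the centred ball of radius `r`, so that `A + B = B_{2r}` and
`A + B + C = B_{3r}`: both inequalities compare `φ r + φ (3r)` with `2 φ (2r)` for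
`φ r = γₙ(B_r)`. In polar coordinates `φ r` is a positive multiple of
`∫₀^r t^(n-1) e^(-t²/2) dt`, whose integrand increases on `[0, √(n-1)]` and decreases on
`[√(n-1), ∞)`. So `φ` is strictly convex on the first interval and strictly concave on the
second, and the radii `√(n-1)/3` and `√(n-1)` give the two inequalities. -/

section Radial

variable {E : Type*} [NormedAddCommGroup E] [NormedSpace ℝ E] [FiniteDimensional ℝ E]
  [Nontrivial E] [MeasurableSpace E] [BorelSpace E] (μ : Measure E) [μ.IsAddHaarMeasure]

theorem withDensity_radial_closedBall {g : ℝ → ℝ} (hg : Continuous g) (hg₀ : 0 ≤ g)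
    {r : ℝ} (hr : 0 ≤ r) :
    μ.withDensity (fun x => ENNReal.ofReal (g ‖x‖)) (closedBall 0 r) =
      ENNReal.ofReal (finrank ℝ E * μ.real (ball 0 1) *
        ∫ t in 0..r, t ^ (finrank ℝ E - 1) * g t) := by
  have hint : IntegrableOn (fun x : E => g ‖x‖) (closedBall 0 r) μ :=
    (hg.comp continuous_norm).continuousOn.integrableOn_compact (isCompact_closedBall _ _)
  rw [withDensity_apply _ measurableSet_closedBall,
    ← ofReal_integral_eq_lintegral_ofReal hint (.of_forall fun x => hg₀ _),
    ← integral_indicator measurableSet_closedBall]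
  have hind : (closedBall (0 : E) r).indicator (fun x => g ‖x‖) =
      fun x => (Iic r).indicator g ‖x‖ := by
    ext x
    simp [indicator]
  have hpow : (fun t : ℝ => t ^ (finrank ℝ E - 1) • (Iic r).indicator g t) =
      (Iic r).indicator (fun t => t ^ (finrank ℝ E - 1) * g t) := by
    ext t
    rw [smul_eq_mul, indicator_mul_right]
  rw [hind, integral_fun_norm_addHaar, hpow, setIntegral_indicator measurableSet_Iic,
    Ioi_inter_Iic, ← intervalIntegral.integral_of_le hr, nsmul_eq_mul, smul_eq_mul, mul_assoc]

end Radial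

theorem strictConvexOn_integral_of_strictMonoOn {f : ℝ → ℝ} (hf : Continuous f) {D : Set ℝ}
    (hD : Convex ℝ D) (hmono : StrictMonoOn f D) (a : ℝ) :
    StrictConvexOn ℝ D fun x => ∫ t in a..x, f t := by
  refine StrictMonoOn.strictConvexOn_of_deriv hD
    (intervalIntegral.continuous_primitive (fun _ _ => hf.intervalIntegrable _ _) a).continuousOn ?_
  rw [funext (Continuous.deriv_integral f hf a)]
  exact hmono.mono interior_subset

theorem strictConcaveOn_integral_of_strictAntiOn {f : ℝ → ℝ} (hf : Continuous f) {D : Set ℝ}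
    (hD : Convex ℝ D) (hanti : StrictAntiOn f D) (a : ℝ) :
    StrictConcaveOn ℝ D fun x => ∫ t in a..x, f t := by
  refine StrictAntiOn.strictConcaveOn_of_deriv hD
    (intervalIntegral.continuous_primitive (fun _ _ => hf.intervalIntegrable _ _) a).continuousOn ?_
  rw [funext (Continuous.deriv_integral f hf a)]
  exact hanti.mono interior_subset

theorem StrictConvexOn.two_mul_apply_midpoint_lt {s : Set ℝ} {f : ℝ → ℝ}
    (hf : StrictConvexOn ℝ s f) {x y : ℝ} (hx : x ∈ s) (hy : y ∈ s) (hxy : x ≠ y) :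
    2 * f ((x + y) / 2) < f x + f y := by
  have h := hf.2 hx hy hxy (one_half_pos (α := ℝ)) one_half_pos (add_halves 1)
  simp only [smul_eq_mul] at h
  rw [show 1 / 2 * x + 1 / 2 * y = (x + y) / 2 by ring] at h
  linarith

theorem StrictConcaveOn.add_lt_two_mul_apply_midpoint {s : Set ℝ} {f : ℝ → ℝ}
    (hf : StrictConcaveOn ℝ s f) {x y : ℝ} (hx : x ∈ s) (hy : y ∈ s) (hxy : x ≠ y) :
    f x + f y < 2 * f ((x + y) / 2) := by
  have h := hf.neg.two_mul_apply_midpoint_lt hx hy hxy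
  simp only [Pi.neg_apply] at h
  linarith

noncomputable def gaussianRadial (n : ℕ) (t : ℝ) : ℝ := t ^ (n - 1) * exp (-t ^ 2 / 2)

theorem continuous_gaussianRadial (n : ℕ) : Continuous (gaussianRadial n) := by
  unfold gaussianRadial
  fun_prop

theorem hasDerivAt_gaussianRadial {n : ℕ} (hn : 2 ≤ n) (t : ℝ) :
    HasDerivAt (gaussianRadial n) (exp (-t ^ 2 / 2) * t ^ (n - 2) * ((n - 1) - t ^ 2)) t := by
  have hsq : HasDerivAt (fun t : ℝ => -t ^ 2 / 2) (-t) t := by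
    refine ((hasDerivAt_pow 2 t).fun_neg.div_const 2).congr_deriv ?_
    push_cast
    ring
  refine ((hasDerivAt_pow (n - 1) t).mul hsq.exp).congr_deriv ?_
  obtain ⟨k, rfl⟩ : ∃ k, n = k + 2 := ⟨n - 2, by omega⟩
  rw [show k + 2 - 1 = k + 1 by omega, show k + 2 - 2 = k by omega]
  push_cast
  ring

theorem strictMonoOn_gaussianRadial {n : ℕ} (hn : 2 ≤ n) :
    StrictMonoOn (gaussianRadial n) (Icc 0 √((n : ℝ) - 1)) := by
  refine strictMonoOn_of_deriv_pos (convex_Icc _ _) (continuous_gaussianRadial n).continuousOn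
    fun t ht => ?_
  rw [interior_Icc] at ht
  have ht2 : t ^ 2 < n - 1 := (lt_sqrt ht.1.le).1 ht.2
  rw [(hasDerivAt_gaussianRadial hn t).deriv]
  exact mul_pos (mul_pos (exp_pos _) (pow_pos ht.1 _)) (by linarith)

theorem strictAntiOn_gaussianRadial {n : ℕ} (hn : 2 ≤ n) :
    StrictAntiOn (gaussianRadial n) (Ici √((n : ℝ) - 1)) := by
  refine strictAntiOn_of_deriv_neg (convex_Ici _) (continuous_gaussianRadial n).continuousOn
    fun t ht => ?_
  rw [interior_Ici] at ht
  have ht0 : 0 < t := (sqrt_nonneg _).trans_lt ht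
  have ht2 : n - 1 < t ^ 2 := (sqrt_lt' ht0).1 ht
  rw [(hasDerivAt_gaussianRadial hn t).deriv]
  exact mul_neg_of_pos_of_neg (mul_pos (exp_pos _) (pow_pos ht0 _)) (by linarith)

theorem closedBall_zero_add_closedBall_zero {E : Type*} [NormedAddCommGroup E] [NormedSpace ℝ E]
    [ProperSpace E] {r s : ℝ} (hr : 0 ≤ r) (hs : 0 ≤ s) :
    closedBall (0 : E) r + closedBall 0 s = closedBall 0 (r + s) := by
  rw [closedBall_add_closedBall hr hs, add_zero]

def IsSymmetricConvexBody {E : Type*} [NormedAddCommGroup E] [NormedSpace ℝ E] (K : Set E) :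
    Prop :=
  IsCompact K ∧ Convex ℝ K ∧ (interior K).Nonempty ∧ K = -K

theorem isSymmetricConvexBody_closedBall {E : Type*} [NormedAddCommGroup E] [NormedSpace ℝ E]
    [ProperSpace E] {r : ℝ} (hr : 0 < r) : IsSymmetricConvexBody (closedBall (0 : E) r) := by
  refine ⟨isCompact_closedBall _ _, convex_closedBall _ _, ?_, by rw [neg_closedBall, neg_zero]⟩
  rw [interior_closedBall _ hr.ne']
  exact nonempty_ball.2 hr

noncomputable def gaussianMeasure (n : ℕ) : Measure (EuclideanSpace ℝ (Fin n)) :=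
  volume.withDensity fun x => ENNReal.ofReal ((2 * π) ^ (-(n : ℝ) / 2) * exp (-‖x‖ ^ 2 / 2))

theorem gaussianMeasure_closedBall {n : ℕ} [NeZero n] {r : ℝ} (hr : 0 ≤ r) :
    gaussianMeasure n (closedBall 0 r) =
      ENNReal.ofReal (n * volume.real (ball (0 : EuclideanSpace ℝ (Fin n)) 1) *
        (2 * π) ^ (-(n : ℝ) / 2) * ∫ t in 0..r, gaussianRadial n t) := by
  rw [gaussianMeasure, withDensity_radial_closedBall volume
      (g := fun t => (2 * π) ^ (-(n : ℝ) / 2) * exp (-t ^ 2 / 2)) (by fun_prop)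
      (fun t => by positivity) hr,
    finrank_euclideanSpace_fin, mul_assoc _ ((2 * π) ^ _),
    ← intervalIntegral.integral_const_mul _ (gaussianRadial n)]
  congr 3 with t
  rw [gaussianRadial]
  ring

theorem gaussianMeasure_closedBall_add_lt_add {n : ℕ} [NeZero n] {a b c d : ℝ} (ha : 0 ≤ a)
    (hb : 0 ≤ b) (hc : 0 ≤ c) (hd : 0 ≤ d)
    (h : (∫ t in 0..a, gaussianRadial n t) + (∫ t in 0..b, gaussianRadial n t) <
      (∫ t in 0..c, gaussianRadial n t) + ∫ t in 0..d, gaussianRadial n t) :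
    gaussianMeasure n (closedBall 0 a) + gaussianMeasure n (closedBall 0 b) <
      gaussianMeasure n (closedBall 0 c) + gaussianMeasure n (closedBall 0 d) := by
  set K := n * volume.real (ball (0 : EuclideanSpace ℝ (Fin n)) 1) * (2 * π) ^ (-(n : ℝ) / 2)
  have hK : 0 < K := by
    have := ENNReal.toReal_pos
      (measure_ball_pos volume (0 : EuclideanSpace ℝ (Fin n)) one_pos).ne' measure_ball_lt_top.ne
    have := NeZero.pos n
    positivity
  have hF : ∀ {s : ℝ}, 0 ≤ s → 0 ≤ K * ∫ t in 0..s, gaussianRadial n t := fun hs =>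
    mul_nonneg hK.le <| intervalIntegral.integral_nonneg hs fun t ht =>
      mul_nonneg (pow_nonneg ht.1 _) (exp_pos _).le
  rw [gaussianMeasure_closedBall ha, gaussianMeasure_closedBall hb, gaussianMeasure_closedBall hc,
    gaussianMeasure_closedBall hd, ← ENNReal.ofReal_add (hF ha) (hF hb),
    ← ENNReal.ofReal_add (hF hc) (hF hd),
    ENNReal.ofReal_lt_ofReal_iff_of_nonneg (add_nonneg (hF ha) (hF hb)), ← mul_add, ← mul_add]
  exact mul_lt_mul_of_pos_left h hK

theorem gaussianMeasure_closedBall_strict_supermodular {n : ℕ} (hn : 2 ≤ n) {r : ℝ}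
    (hr : 0 < r) (h3r : 3 * r ≤ √((n : ℝ) - 1)) :
    gaussianMeasure n (closedBall 0 r + closedBall 0 r) +
        gaussianMeasure n (closedBall 0 r + closedBall 0 r) <
      gaussianMeasure n (closedBall 0 r + closedBall 0 r + closedBall 0 r) +
        gaussianMeasure n (closedBall 0 r) := by
  have : NeZero n := ⟨by omega⟩
  have hconv := strictConvexOn_integral_of_strictMonoOn (continuous_gaussianRadial n)
    (convex_Icc _ _) (strictMonoOn_gaussianRadial hn) 0
  have hmid := hconv.two_mul_apply_midpoint_lt (x := r) (y := r + r + r)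
    ⟨hr.le, by linarith⟩ ⟨by linarith, by linarith⟩ (by linarith)
  rw [show (r + (r + r + r)) / 2 = r + r by ring] at hmid
  rw [closedBall_zero_add_closedBall_zero hr.le hr.le,
    closedBall_zero_add_closedBall_zero (by positivity) hr.le]
  exact gaussianMeasure_closedBall_add_lt_add (by positivity) (by positivity) (by positivity)
    hr.le (by linarith)

theorem gaussianMeasure_closedBall_strict_submodular {n : ℕ} (hn : 2 ≤ n) {r : ℝ}
    (hr : √((n : ℝ) - 1) ≤ r) :
    gaussianMeasure n (closedBall 0 r + closedBall 0 r + closedBall 0 r) +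
        gaussianMeasure n (closedBall 0 r) <
      gaussianMeasure n (closedBall 0 r + closedBall 0 r) +
        gaussianMeasure n (closedBall 0 r + closedBall 0 r) := by
  have hr₀ : 0 < r := (sqrt_pos.2 (sub_pos.2 (Nat.one_lt_cast.2 hn))).trans_le hr
  have : NeZero n := ⟨by omega⟩
  have hconc := strictConcaveOn_integral_of_strictAntiOn (continuous_gaussianRadial n)
    (convex_Ici _) (strictAntiOn_gaussianRadial hn) 0
  have hmid := hconc.add_lt_two_mul_apply_midpoint (x := r) (y := r + r + r)
    hr (by simp only [mem_Ici]; linarith) (by linarith)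
  rw [show (r + (r + r + r)) / 2 = r + r by ring] at hmid
  rw [closedBall_zero_add_closedBall_zero hr₀.le hr₀.le,
    closedBall_zero_add_closedBall_zero (by positivity) hr₀.le]
  exact gaussianMeasure_closedBall_add_lt_add (by positivity) hr₀.le (by positivity)
    (by positivity) (by linarith)

theorem stmt5 {n : ℕ} (hn : 2 ≤ n) (γ : Measure (EuclideanSpace ℝ (Fin n)))
    (hγ : γ = volume.withDensity
      (fun x => ENNReal.ofReal ((2 * Real.pi) ^ (-(n:ℝ)/2) * Real.exp (-‖x‖^2/2)))) :
    (∃ A B C : Set (EuclideanSpace ℝ (Fin n)),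
      (IsCompact A ∧ Convex ℝ A ∧ (interior A).Nonempty ∧ A = -A) ∧
      (IsCompact B ∧ Convex ℝ B ∧ (interior B).Nonempty ∧ B = -B) ∧
      (IsCompact C ∧ Convex ℝ C ∧ (interior C).Nonempty ∧ C = -C) ∧
      γ (A + B) + γ (A + C) < γ (A + B + C) + γ A) ∧
    (∃ A B C : Set (EuclideanSpace ℝ (Fin n)),
      (IsCompact A ∧ Convex ℝ A ∧ (interior A).Nonempty ∧ A = -A) ∧
      (IsCompact B ∧ Convex ℝ B ∧ (interior B).Nonempty ∧ B = -B) ∧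
      (IsCompact C ∧ Convex ℝ C ∧ (interior C).Nonempty ∧ C = -C) ∧
      γ (A + B + C) + γ A < γ (A + B) + γ (A + C)) := by
  obtain rfl : γ = gaussianMeasure n := hγ
  have hs : 0 < √((n : ℝ) - 1) := sqrt_pos.2 (sub_pos.2 (Nat.one_lt_cast.2 hn))
  have hsmall :
      IsSymmetricConvexBody (closedBall (0 : EuclideanSpace ℝ (Fin n)) (√(n - 1) / 3)) :=
    isSymmetricConvexBody_closedBall (div_pos hs three_pos)
  have hlarge : IsSymmetricConvexBody (closedBall (0 : EuclideanSpace ℝ (Fin n)) √(n - 1)) :=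
    isSymmetricConvexBody_closedBall hs
  exact ⟨⟨_, _, _, hsmall, hsmall, hsmall,
      gaussianMeasure_closedBall_strict_supermodular hn (by positivity) (by linarith)⟩,
    ⟨_, _, _, hlarge, hlarge, hlarge, gaussianMeasure_closedBall_strict_submodular hn le_rfl⟩⟩
end

section
/- Let β > 0, p ≥ 1, n ≥ 1, and let R > 0 satisfy R^p < β + βn/p. Then n ∫₀¹ exp((R^p/β)(1 − r^p)) r^{n−1} dr ≤ 1 + pR^p / (pβ + βn − pR^p). -/
/-!
With `c = R^p/β` and the moments `M s = ∫₀¹ exp (c (1 - r^p)) r^s dr`, differentiating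
`r^(s+1) exp (c (1 - r^p))` gives the recurrence `(s + 1) M s = 1 + c p M (s + p)`. Applied at `s + p`
together with `M (s + 2p) ≤ M (s + p)` it yields `(s + 1 + p - c p) M (s + p) ≤ 1`, and substituting
this back at `s = n - 1` gives the bound. This is the geometric-series estimate of the Taylor expansion
of the exponential, summed in closed form.
-/

open Real intervalIntegral

noncomputable def expRpowMoment (c p s : ℝ) : ℝ :=
  ∫ r in (0:ℝ)..1, exp (c * (1 - r ^ p)) * r ^ s

namespace expRpowMoment

variable {c p s t r : ℝ}

lemma continuous_integrand (hp : 0 ≤ p) (hs : 0 ≤ s) :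
    Continuous fun r : ℝ => exp (c * (1 - r ^ p)) * r ^ s := by
  have := continuous_rpow_const hp
  have := continuous_rpow_const hs
  fun_prop

lemma le_of_exponent_le (hp : 0 ≤ p) (hs : 0 ≤ s) (hst : s ≤ t) :
    expRpowMoment c p t ≤ expRpowMoment c p s :=
  integral_mono_on zero_le_one
    ((continuous_integrand hp (hs.trans hst)).intervalIntegrable 0 1)
    ((continuous_integrand hp hs).intervalIntegrable 0 1)
    fun _ hr => mul_le_mul_of_nonneg_left
      (rpow_le_rpow_of_exponent_ge' hr.1 hr.2 hs hst) (exp_pos _).le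

lemma hasDerivAt_rpow_mul_exp (hr : 0 < r) :
    HasDerivAt (fun x : ℝ => x ^ (s + 1) * exp (c * (1 - x ^ p)))
      ((s + 1) * (exp (c * (1 - r ^ p)) * r ^ s)
        - c * p * (exp (c * (1 - r ^ p)) * r ^ (s + p))) r := by
  have hexp := (((hasDerivAt_rpow_const (p := p) (Or.inl hr.ne')).const_sub 1).const_mul c).exp
  refine ((hasDerivAt_rpow_const (p := s + 1) (Or.inl hr.ne')).mul hexp).congr_deriv ?_
  have hsp : r ^ (s + p) = r ^ (s + 1) * r ^ (p - 1) := by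
    rw [← rpow_add hr]; ring_nf
  rw [hsp, add_sub_cancel_right]
  ring

lemma recurrence (hp : 0 < p) (hs : 0 ≤ s) :
    (s + 1) * expRpowMoment c p s = 1 + c * p * expRpowMoment c p (s + p) := by
  have hint_s : IntervalIntegrable _ MeasureTheory.volume 0 1 :=
    (continuous_integrand (c := c) hp.le hs).intervalIntegrable 0 1
  have hint_sp : IntervalIntegrable _ MeasureTheory.volume 0 1 :=
    (continuous_integrand (c := c) hp.le (add_nonneg hs hp.le)).intervalIntegrable 0 1
  have hF : ContinuousOn (fun x : ℝ => x ^ (s + 1) * exp (c * (1 - x ^ p))) (Set.Icc 0 1) := by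
    have := continuous_rpow_const (add_nonneg hs zero_le_one)
    have := continuous_rpow_const hp.le
    exact Continuous.continuousOn (by fun_prop)
  have hFTC := integral_eq_sub_of_hasDerivAt_of_le zero_le_one hF
    (fun r hr => hasDerivAt_rpow_mul_exp (s := s) (c := c) (p := p) hr.1)
    ((hint_s.const_mul _).sub (hint_sp.const_mul _))
  rw [integral_sub (hint_s.const_mul _) (hint_sp.const_mul _), integral_const_mul,
    integral_const_mul] at hFTC
  simp only [one_rpow, sub_self, mul_zero, exp_zero, mul_one,
    zero_rpow (by linarith : s + 1 ≠ 0), zero_mul, sub_zero] at hFTC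
  unfold expRpowMoment
  linarith

lemma le_one_div (hp : 0 < p) (hs : 0 ≤ s) (hc : 0 ≤ c) (hcp : c * p < s + 1 + p) :
    expRpowMoment c p (s + p) ≤ 1 / (s + 1 + p - c * p) := by
  have hrec := recurrence (c := c) hp (add_nonneg hs hp.le)
  have hmono := le_of_exponent_le (c := c) hp.le (add_nonneg hs hp.le) (le_add_of_nonneg_right hp.le)
  rw [le_div_iff₀ (by linarith)]
  nlinarith [mul_le_mul_of_nonneg_left hmono (mul_nonneg hc hp.le)]

lemma mul_le (hp : 0 < p) (hs : 0 ≤ s) (hc : 0 ≤ c) (hcp : c * p < s + 1 + p) :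
    (s + 1) * expRpowMoment c p s ≤ 1 + c * p / (s + 1 + p - c * p) := by
  rw [recurrence hp hs, ← mul_one_div (c * p)]
  gcongr
  exact le_one_div hp hs hc hcp

end expRpowMoment

theorem stmt8 (β p : ℝ) (hβ : 0 < β) (hp : 1 ≤ p) (n : ℕ) (hn : 1 ≤ n)
    (R : ℝ) (hR : 0 < R) (hRp : R ^ p < β + β * n / p) :
    (n:ℝ) * ∫ r in (0:ℝ)..1, Real.exp ((R^p/β) * (1 - r^p)) * r^(n-1) ≤
      1 + p * R^p / (p*β + β*n - p*R^p) := by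
  have hp0 : 0 < p := by linarith
  have hs : ((n - 1 : ℕ) : ℝ) = n - 1 := Nat.cast_pred hn
  have hc : 0 ≤ R ^ p / β := div_nonneg (rpow_pos_of_pos hR p).le hβ.le
  have hcp : R ^ p / β * p < (n - 1 : ℕ) + 1 + p := by
    rw [hs, div_mul_eq_mul_div, div_lt_iff₀ hβ]
    rw [← sub_pos] at hRp ⊢
    convert mul_pos hp0 hRp using 1
    field_simp
    ring
  have key := expRpowMoment.mul_le hp0 (Nat.cast_nonneg _) hc hcp
  simp only [expRpowMoment, rpow_natCast] at key
  rw [hs, sub_add_cancel] at key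
  convert key using 2
  field_simp
  ring
end

section
/- For every natural number n ≥ 1, n ∫₀¹ e^{(1−r²)/2} r^{n−1} dr ≤ 1 + 1/(n+1). -/
/-!
With `E r = exp ((1 - r²) / 2)` one has `(rⁿ E)' = n rⁿ⁻¹ E - rⁿ (r E)`, and `r E ≤ 1` because
`x² ≤ exp (x² - 1)`. Hence `n rⁿ⁻¹ E ≤ (rⁿ E)' + rⁿ` on `[0, 1]`, and integrating gives
`n ∫₀¹ E rⁿ⁻¹ ≤ E(1) + 1 / (n + 1) = 1 + 1 / (n + 1)`.
-/

open Real

lemma mul_exp_one_sub_sq_div_two_le_one (x : ℝ) : x * exp ((1 - x ^ 2) / 2) ≤ 1 := by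
  have hsq : (x * exp ((1 - x ^ 2) / 2)) ^ 2 = x ^ 2 * exp (1 - x ^ 2) := by
    rw [mul_pow, ← exp_nat_mul]
    ring_nf
  have hle : x ^ 2 * exp (1 - x ^ 2) ≤ 1 :=
    calc x ^ 2 * exp (1 - x ^ 2) ≤ exp (x ^ 2 - 1) * exp (1 - x ^ 2) := by
          gcongr
          linarith [add_one_le_exp (x ^ 2 - 1)]
      _ = 1 := by rw [← exp_add]; simp
  nlinarith [abs_le_of_sq_le_sq' (a := x * exp ((1 - x ^ 2) / 2)) (b := 1)]

lemma hasDerivAt_pow_succ_mul_exp_one_sub_sq_div_two (m : ℕ) (x : ℝ) :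
    HasDerivAt (fun r => r ^ (m + 1) * exp ((1 - r ^ 2) / 2))
      ((m + 1) * x ^ m * exp ((1 - x ^ 2) / 2) - x ^ (m + 1) * (x * exp ((1 - x ^ 2) / 2))) x := by
  have hpow : HasDerivAt (fun r : ℝ => r ^ (m + 1)) ((m + 1) * x ^ m) x := by
    simpa using hasDerivAt_pow (m + 1) x
  have hexp : HasDerivAt (fun r : ℝ => exp ((1 - r ^ 2) / 2)) (exp ((1 - x ^ 2) / 2) * -x) x := by
    have := (((hasDerivAt_pow 2 x).const_sub 1).div_const 2).exp
    convert this using 1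
    ring
  exact (hpow.mul hexp).congr_deriv (by ring)

lemma succ_mul_integral_exp_one_sub_sq_div_two_mul_pow_le (m : ℕ) :
    (m + 1 : ℝ) * ∫ r in (0 : ℝ)..1, exp ((1 - r ^ 2) / 2) * r ^ m ≤ 1 + 1 / (m + 2) := by
  set F' : ℝ → ℝ := fun x =>
    (m + 1) * x ^ m * exp ((1 - x ^ 2) / 2) - x ^ (m + 1) * (x * exp ((1 - x ^ 2) / 2))
  have hF'_cont : Continuous F' := by fun_prop
  have hpointwise : ∀ x ∈ Set.Icc (0 : ℝ) 1,
      (m + 1) * (exp ((1 - x ^ 2) / 2) * x ^ m) ≤ F' x + x ^ (m + 1) := by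
    rintro x ⟨hx0, -⟩
    have := mul_le_mul_of_nonneg_left (mul_exp_one_sub_sq_div_two_le_one x)
      (pow_nonneg hx0 (m + 1))
    simp only [F']
    linarith
  calc (m + 1 : ℝ) * ∫ r in (0 : ℝ)..1, exp ((1 - r ^ 2) / 2) * r ^ m
      = ∫ r in (0 : ℝ)..1, (m + 1) * (exp ((1 - r ^ 2) / 2) * r ^ m) :=
        (intervalIntegral.integral_const_mul _ _).symm
    _ ≤ ∫ r in (0 : ℝ)..1, (F' r + r ^ (m + 1)) :=
        intervalIntegral.integral_mono_on zero_le_one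
          (Continuous.intervalIntegrable (by fun_prop) _ _)
          ((hF'_cont.add (continuous_pow _)).intervalIntegrable _ _) hpointwise
    _ = (1 ^ (m + 1) * exp ((1 - 1 ^ 2) / 2) - 0 ^ (m + 1) * exp ((1 - 0 ^ 2) / 2))
          + ∫ r in (0 : ℝ)..1, r ^ (m + 1) := by
        rw [intervalIntegral.integral_add (hF'_cont.intervalIntegrable _ _)
            ((continuous_pow _).intervalIntegrable _ _),
          intervalIntegral.integral_eq_sub_of_hasDerivAt
            (fun x _ => hasDerivAt_pow_succ_mul_exp_one_sub_sq_div_two m x)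
            (hF'_cont.intervalIntegrable _ _)]
    _ = 1 + 1 / (m + 2) := by
        rw [integral_pow]
        norm_num
        ring

theorem stmt9_general (n : ℕ) :
    (n:ℝ) * ∫ r in (0:ℝ)..1, Real.exp ((1 - r^2)/2) * r^(n-1) ≤ 1 + 1/((n:ℝ)+1) := by
  rcases n with _ | m
  · norm_num
  · have := succ_mul_integral_exp_one_sub_sq_div_two_mul_pow_le m
    push_cast
    rwa [add_assoc, one_add_one_eq_two]

theorem stmt9 (n : ℕ) (hn : 1 ≤ n) :
    (n:ℝ) * ∫ r in (0:ℝ)..1, Real.exp ((1 - r^2)/2) * r^(n-1) ≤ 1 + 1/((n:ℝ)+1) :=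
  stmt9_general n
end

section
/- Let p > 1, n ≥ 1 (real numbers), and β ≥ 1 + 1/(p−1). Then n ∫₀¹ e^{(1 − r^p)/β} r^{n−1} dr ≤ e^{(1 − (n/(n+1))^p)/β}. -/
/-! The measure `n r^{n-1} dr` is a probability density on `[0, 1]` with mean `n/(n+1)`, and
`r ↦ exp ((1 - r^p)/β)` is concave on `[0, 1]` as soon as `p ≤ (p - 1) β`; the inequality is
Jensen's. Jensen is proved by integrating the tangent line of the concave function at the mean. -/

open Real Set intervalIntegral

theorem ConcaveOn.le_add_mul_sub_of_hasDerivAt {S : Set ℝ} {f : ℝ → ℝ} {f' x y : ℝ}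
    (hf : ConcaveOn ℝ S f) (hx : x ∈ S) (hy : y ∈ S) (hf' : HasDerivAt f f' x) :
    f y ≤ f x + f' * (y - x) := by
  rcases lt_trichotomy y x with hyx | rfl | hxy
  · have h := hf.le_slope_of_hasDerivAt hy hx hyx hf'
    rw [slope_def_field, le_div_iff₀ (sub_pos.2 hyx)] at h
    linarith
  · simp
  · have h := hf.slope_le_of_hasDerivAt hx hy hxy hf'
    rw [slope_def_field, div_le_iff₀ (sub_pos.2 hxy)] at h
    linarith

theorem ConcaveOn.intervalIntegral_mul_le_of_hasDerivAt {g w : ℝ → ℝ} {a b m c : ℝ}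
    (hab : a ≤ b) (hg : ConcaveOn ℝ (Icc a b) g) (hgc : ContinuousOn g (Icc a b))
    (hwc : ContinuousOn w (Icc a b)) (hw : ∀ x ∈ Icc a b, 0 ≤ w x)
    (hw_one : ∫ x in a..b, w x = 1) (hw_mean : ∫ x in a..b, x * w x = m)
    (hg' : HasDerivAt g c m) :
    ∫ x in a..b, g x * w x ≤ g m := by
  rw [← uIcc_of_le hab] at hgc hwc
  have hw_int : IntervalIntegrable w MeasureTheory.volume a b := hwc.intervalIntegrable
  have hxw_int : IntervalIntegrable (fun x => x * w x) MeasureTheory.volume a b :=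
    (continuousOn_id.mul hwc).intervalIntegrable
  have hm : m ∈ Icc a b := by
    rw [← hw_mean]
    constructor
    · calc a = ∫ x in a..b, a * w x := by rw [integral_const_mul, hw_one, mul_one]
        _ ≤ ∫ x in a..b, x * w x := integral_mono_on hab (hw_int.const_mul a) hxw_int
            fun x hx => mul_le_mul_of_nonneg_right hx.1 (hw x hx)
    · calc ∫ x in a..b, x * w x ≤ ∫ x in a..b, b * w x := integral_mono_on hab hxw_int
            (hw_int.const_mul b) fun x hx => mul_le_mul_of_nonneg_right hx.2 (hw x hx)
        _ = b := by rw [integral_const_mul, hw_one, mul_one]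
  calc ∫ x in a..b, g x * w x
      ≤ ∫ x in a..b, (g m - c * m) * w x + c * (x * w x) := by
        refine integral_mono_on hab (hgc.mul hwc).intervalIntegrable
          ((hw_int.const_mul _).add (hxw_int.const_mul c)) fun x hx => ?_
        have h := hg.le_add_mul_sub_of_hasDerivAt hm hx hg'
        nlinarith [hw x hx]
    _ = g m := by
        rw [integral_add (hw_int.const_mul _) (hxw_int.const_mul c), integral_const_mul,
          integral_const_mul, hw_one, hw_mean]
        ring

theorem integral_rpow_zero_one {s : ℝ} (hs : -1 < s) :
    ∫ r in (0:ℝ)..1, r ^ s = 1 / (s + 1) := by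
  rw [integral_rpow (.inl hs), one_rpow, zero_rpow (by linarith)]
  ring

theorem integral_const_mul_rpow_sub_one_zero_one {n : ℝ} (hn : 0 < n) :
    ∫ r in (0:ℝ)..1, n * r ^ (n - 1) = 1 := by
  rw [integral_const_mul, integral_rpow_zero_one (by linarith), sub_add_cancel]
  field_simp

theorem integral_id_mul_const_mul_rpow_sub_one_zero_one {n : ℝ} (hn : 0 < n) :
    ∫ r in (0:ℝ)..1, r * (n * r ^ (n - 1)) = n / (n + 1) := by
  have h : EqOn (fun r : ℝ => r * (n * r ^ (n - 1))) (fun r => n * r ^ n) (uIcc 0 1) := by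
    intro r hr
    rw [uIcc_of_le zero_le_one] at hr
    have hpow := rpow_add_one' hr.1 (show n - 1 + 1 ≠ 0 by linarith)
    rw [sub_add_cancel] at hpow
    simp only [hpow]
    ring
  rw [integral_congr h, integral_const_mul, integral_rpow_zero_one (by linarith)]
  ring

theorem hasDerivAt_exp_one_sub_rpow_div {p : ℝ} (hp : 1 ≤ p) (β r : ℝ) :
    HasDerivAt (fun r => exp ((1 - r ^ p) / β))
      (-(p / β) * (r ^ (p - 1) * exp ((1 - r ^ p) / β))) r := by
  convert (((hasDerivAt_rpow_const (.inr hp)).const_sub 1).div_const β).exp using 1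
  ring

theorem concaveOn_exp_one_sub_rpow_div {p β : ℝ} (hp : 1 < p) (hβ : p ≤ (p - 1) * β) :
    ConcaveOn ℝ (Icc 0 1) fun r => exp ((1 - r ^ p) / β) := by
  have hβ0 : 0 < β := by nlinarith
  have hderiv := hasDerivAt_exp_one_sub_rpow_div hp.le β
  refine concaveOn_of_hasDerivWithinAt2_nonpos (convex_Icc 0 1)
    (fun r _ => (hderiv r).continuousAt.continuousWithinAt)
    (fun r _ => (hderiv r).hasDerivWithinAt)
    (f'' := fun r => -(p / β) * r ^ (p - 2) * exp ((1 - r ^ p) / β) * ((p - 1) - p / β * r ^ p))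
    (fun r hr => ?_) (fun r hr => ?_)
  all_goals rw [interior_Icc] at hr
  · have hpow := hasDerivAt_rpow_const (p := p - 1) (.inl hr.1.ne')
    have hsq : r ^ (p - 1) * r ^ (p - 1) = r ^ (p - 2) * r ^ p := by
      rw [← rpow_add hr.1, ← rpow_add hr.1]; ring_nf
    refine (((hpow.mul (hderiv r)).const_mul (-(p / β))).congr_deriv ?_).hasDerivWithinAt
    rw [show p - 1 - 1 = p - 2 by ring]
    linear_combination (-(p / β)) * (-(p / β)) * exp ((1 - r ^ p) / β) * hsq
  · have hrp : r ^ p ≤ 1 := rpow_le_one hr.1.le hr.2.le (by linarith)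
    have hsign : 0 ≤ (p - 1) - p / β * r ^ p := by
      have : p / β ≤ p - 1 := by rw [div_le_iff₀ hβ0]; linarith
      nlinarith [rpow_nonneg hr.1.le p, div_pos (by linarith : 0 < p) hβ0]
    have : 0 ≤ p / β * r ^ (p - 2) * exp ((1 - r ^ p) / β) :=
      mul_nonneg (mul_nonneg (by positivity) (rpow_nonneg hr.1.le _)) (exp_pos _).le
    nlinarith

theorem stmt10 (p : ℝ) (hp : 1 < p) (n : ℝ) (hn : 1 ≤ n) (β : ℝ)
    (hβ : 1 + 1/(p-1) ≤ β) :
    n * ∫ r in (0:ℝ)..1, Real.exp ((1 - r^p)/β) * r^(n-1) ≤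
      Real.exp ((1 - (n/(n+1))^p)/β) := by
  have hn0 : 0 < n := by linarith
  have hpβ : p ≤ (p - 1) * β := by
    have h : (p - 1) * (1 + 1 / (p - 1)) = p := by
      field_simp [(by linarith : p - 1 ≠ 0)]; ring
    nlinarith
  have hderiv := hasDerivAt_exp_one_sub_rpow_div hp.le β
  have hw_cont : ContinuousOn (fun r : ℝ => n * r ^ (n - 1)) (Icc 0 1) :=
    (continuous_const.mul (continuous_rpow_const (by linarith))).continuousOn
  calc n * ∫ r in (0:ℝ)..1, exp ((1 - r ^ p) / β) * r ^ (n - 1)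
      = ∫ r in (0:ℝ)..1, exp ((1 - r ^ p) / β) * (n * r ^ (n - 1)) := by
        rw [← integral_const_mul]; congr 1; ext r; ring
    _ ≤ exp ((1 - (n / (n + 1)) ^ p) / β) :=
        (concaveOn_exp_one_sub_rpow_div hp hpβ).intervalIntegral_mul_le_of_hasDerivAt
          zero_le_one (fun r _ => (hderiv r).continuousAt.continuousWithinAt) hw_cont
          (fun r hr => mul_nonneg hn0.le (rpow_nonneg hr.1 _))
          (integral_const_mul_rpow_sub_one_zero_one hn0)
          (integral_id_mul_const_mul_rpow_sub_one_zero_one hn0) (hderiv _)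
end

section
/- Let μ be a Borel measure on ℝⁿ, let F : (0, μ(ℝⁿ)) → ℝ be a continuous strictly monotone function, and suppose μ is F-concave on a class 𝒞 of compact sets: μ((1−λ)K + λL) ≥ F^{−1}((1−λ)F(μ(K)) + λF(μ(L))) for all K, L ∈ 𝒞 and λ ∈ [0,1]. Assume F is differentiable at μ(K) with F′(μ(K)) ≠ 0. Then the mixed measures satisfy Minkowski's first inequality: μ(K;L) − μ(K;K) ≥ (F(μ(L)) − F(μ(K)))/F′(μ(K)), where μ(K;M) := liminf_{ε→0⁺} (μ(K + εM) − μ(K))/ε and we assume the one-sided derivative d/dλ μ((1−λ)K + λL)|_{λ=0⁺} exists and equals μ(K;L) − μ(K;K). -/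
/-!
Along the segment `l ↦ (1 - l) • K + l • L`, `F`-concavity says that `F ∘ μ` lies above the chord
from `F (μ K)` to `F (μ L)`. A function lying above a chord and agreeing with it at `l = 0` has
right derivative at least the slope of the chord, and by the chain rule that right derivative is
`F' (μ K)` times the right derivative of the measure. The decreasing case is the increasing one
applied to `-F`.
-/

open Pointwise MeasureTheory Filter Set

/-- The mixed measure `μ(K;M) = liminf_{ε→0⁺} (μ(K+εM)-μ(K))/ε`. -/
noncomputable def mixm {n : ℕ} (μ : Measure (EuclideanSpace ℝ (Fin n)))
    (K M : Set (EuclideanSpace ℝ (Fin n))) : ℝ :=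
  liminf (fun ε : ℝ => ((μ (K + ε • M)).toReal - (μ K).toReal) / ε)
    (nhdsWithin 0 (Set.Ioi 0))

open Topology

theorem le_of_hasDerivWithinAt_Ici_of_add_mul_le {g : ℝ → ℝ} {g' c x : ℝ}
    (hg : HasDerivWithinAt g g' (Ici x) x) (h : ∀ᶠ t in 𝓝[>] x, g x + (t - x) * c ≤ g t) :
    c ≤ g' := by
  have hslope : Tendsto (slope g x) (𝓝[>] x) (𝓝 g') :=
    (hasDerivWithinAt_iff_tendsto_slope' self_notMem_Ioi).1 hg.Ioi_of_Ici
  refine ge_of_tendsto hslope ?_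
  filter_upwards [h, self_mem_nhdsWithin] with t ht hxt
  rw [slope_def_field, le_div_iff₀ (sub_pos.2 hxt)]
  linarith

theorem StrictMono.sub_div_le_of_le_comp {F φ : ℝ → ℝ} {a b F' D : ℝ} (hF : StrictMono F)
    (hF' : HasDerivAt F F' a) (hF'ne : F' ≠ 0) (hφ : HasDerivWithinAt φ D (Ici 0) 0)
    (hφ0 : φ 0 ≤ a) (hconc : ∀ l ∈ Icc (0 : ℝ) 1, (1 - l) * F a + l * F b ≤ F (φ l)) :
    (F b - F a) / F' ≤ D := by
  have hφa : φ 0 = a :=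
    hφ0.antisymm (hF.le_iff_le.1 (by simpa using hconc 0 (left_mem_Icc.2 zero_le_one)))
  have hF'pos : 0 < F' := (hF'.nonneg_of_monotone hF.monotone).lt_of_ne' hF'ne
  have hchord : F b - F a ≤ F' * D := by
    refine le_of_hasDerivWithinAt_Ici_of_add_mul_le ((hφa ▸ hF').comp_hasDerivWithinAt 0 hφ) ?_
    filter_upwards [Ioc_mem_nhdsGT zero_lt_one] with l hl
    have := hconc l (Ioc_subset_Icc_self hl)
    simp only [Function.comp, hφa, sub_zero]
    linarith
  rwa [div_le_iff₀' hF'pos]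

theorem StrictAnti.sub_div_le_of_comp_le {F φ : ℝ → ℝ} {a b F' D : ℝ} (hF : StrictAnti F)
    (hF' : HasDerivAt F F' a) (hF'ne : F' ≠ 0) (hφ : HasDerivWithinAt φ D (Ici 0) 0)
    (hφ0 : φ 0 ≤ a) (hconv : ∀ l ∈ Icc (0 : ℝ) 1, F (φ l) ≤ (1 - l) * F a + l * F b) :
    (F b - F a) / F' ≤ D := by
  have hnegF : StrictMono (-F) := fun _ _ hxy => neg_lt_neg (hF hxy)
  have := hnegF.sub_div_le_of_le_comp (b := b) hF'.neg (neg_ne_zero.2 hF'ne) hφ hφ0 fun l hl => by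
    simp only [Pi.neg_apply]
    linarith [hconv l hl]
  simpa only [Pi.neg_apply, neg_sub_neg, ← neg_sub (F b), neg_div_neg_eq] using this

/-- Only an inequality, since `0 • ∅ = ∅`; the hypothesis at `l = 0` in `StrictMono.sub_div_le_of_le_comp`
upgrades it to equality. -/
theorem toReal_measure_add_zero_smul_le {E : Type*} [AddCommGroup E] [Module ℝ E]
    [MeasurableSpace E] (μ : Measure E) (K L : Set E) :
    (μ (K + (0 : ℝ) • L)).toReal ≤ (μ K).toReal := by
  rcases L.eq_empty_or_nonempty with rfl | hL
  · simp
  · rw [zero_smul_set hL, add_zero]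

theorem stmt14_general {n : ℕ} (μ : Measure (EuclideanSpace ℝ (Fin n)))
    (C : Set (Set (EuclideanSpace ℝ (Fin n))))
    (F : ℝ → ℝ)
    (hconc :
      (StrictMono F ∧ ∀ K ∈ C, ∀ L ∈ C, ∀ l ∈ Set.Icc (0:ℝ) 1,
        (1-l) * F (μ K).toReal + l * F (μ L).toReal ≤
          F (μ ((1-l) • K + l • L)).toReal) ∨
      (StrictAnti F ∧ ∀ K ∈ C, ∀ L ∈ C, ∀ l ∈ Set.Icc (0:ℝ) 1,
        F (μ ((1-l) • K + l • L)).toReal ≤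
          (1-l) * F (μ K).toReal + l * F (μ L).toReal))
    (K L : Set (EuclideanSpace ℝ (Fin n))) (hK : K ∈ C) (hL : L ∈ C)
    (F' : ℝ) (hF' : HasDerivAt F F' (μ K).toReal) (hF'ne : F' ≠ 0)
    (hderiv : HasDerivWithinAt (fun l : ℝ => (μ ((1-l) • K + l • L)).toReal)
      (mixm μ K L - mixm μ K K) (Set.Ici 0) 0) :
    (F (μ L).toReal - F (μ K).toReal) / F' ≤ mixm μ K L - mixm μ K K := by
  have hφ0 : (μ ((1 - 0 : ℝ) • K + (0 : ℝ) • L)).toReal ≤ (μ K).toReal := by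
    rw [sub_zero, one_smul]
    exact toReal_measure_add_zero_smul_le μ K L
  rcases hconc with ⟨hF, hconc⟩ | ⟨hF, hconv⟩
  · exact hF.sub_div_le_of_le_comp hF' hF'ne hderiv hφ0 (hconc K hK L hL)
  · exact hF.sub_div_le_of_comp_le hF' hF'ne hderiv hφ0 (hconv K hK L hL)

theorem stmt14 {n : ℕ} (μ : Measure (EuclideanSpace ℝ (Fin n)))
    (C : Set (Set (EuclideanSpace ℝ (Fin n)))) (hCcpt : ∀ A ∈ C, IsCompact A)
    (F : ℝ → ℝ) (hFcont : Continuous F)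
    (hconc :
      (StrictMono F ∧ ∀ K ∈ C, ∀ L ∈ C, ∀ l ∈ Set.Icc (0:ℝ) 1,
        (1-l) * F (μ K).toReal + l * F (μ L).toReal ≤
          F (μ ((1-l) • K + l • L)).toReal) ∨
      (StrictAnti F ∧ ∀ K ∈ C, ∀ L ∈ C, ∀ l ∈ Set.Icc (0:ℝ) 1,
        F (μ ((1-l) • K + l • L)).toReal ≤
          (1-l) * F (μ K).toReal + l * F (μ L).toReal))
    (K L : Set (EuclideanSpace ℝ (Fin n))) (hK : K ∈ C) (hL : L ∈ C)
    (F' : ℝ) (hF' : HasDerivAt F F' (μ K).toReal) (hF'ne : F' ≠ 0)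
    (hderiv : HasDerivWithinAt (fun l : ℝ => (μ ((1-l) • K + l • L)).toReal)
      (mixm μ K L - mixm μ K K) (Set.Ici 0) 0) :
    (F (μ L).toReal - F (μ K).toReal) / F' ≤ mixm μ K L - mixm μ K K :=
  stmt14_general μ C F hconc K L hK hL F' hF' hF'ne hderiv
end

section
/- Let μ be a log-concave probability measure on ℝⁿ and K, L convex bodies with μ(K), μ(L) > 0. Assume the one-sided derivative d/dλ μ((1−λ)K + λL)|_{λ=0⁺} exists and equals μ(K;L) − μ(K;K), where μ(K;M) := liminf_{ε→0⁺}(μ(K+εM) − μ(K))/ε. Then μ(K;L) − μ(K;K) ≥ μ(K)·log(μ(L)/μ(K)). -/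
open Pointwise MeasureTheory Filter Set

theorem stmt15 {n : ℕ} (μ : Measure (EuclideanSpace ℝ (Fin n)))
    [IsProbabilityMeasure μ]
    (hlc : ∀ A B : Set (EuclideanSpace ℝ (Fin n)), IsCompact A → IsCompact B →
      A.Nonempty → B.Nonempty →
      ∀ l ∈ Set.Icc (0:ℝ) 1, μ A ^ (1 - l) * μ B ^ l ≤ μ ((1 - l) • A + l • B))
    (K L : Set (EuclideanSpace ℝ (Fin n)))
    (hK : IsCompact K) (hKc : Convex ℝ K) (hKi : (interior K).Nonempty)
    (hL : IsCompact L) (hLc : Convex ℝ L) (hLi : (interior L).Nonempty)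
    (hμK : 0 < μ K) (hμL : 0 < μ L)
    (hderiv : HasDerivWithinAt (fun l : ℝ => (μ ((1-l) • K + l • L)).toReal)
      (mixm μ K L - mixm μ K K) (Set.Ici 0) 0) :
    (μ K).toReal * Real.log ((μ L).toReal / (μ K).toReal) ≤
      mixm μ K L - mixm μ K K := by
  set f : ℝ → ℝ := fun l : ℝ => (μ ((1-l) • K + l • L)).toReal with hf
  set a : ℝ := (μ K).toReal with ha'
  set b : ℝ := (μ L).toReal with hb'
  have ha : 0 < a := ENNReal.toReal_pos hμK.ne' (measure_ne_top μ K)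
  have hb : 0 < b := ENNReal.toReal_pos hμL.ne' (measure_ne_top μ L)
  set c : ℝ := Real.log (b / a) with hc'
  set g : ℝ → ℝ := fun l : ℝ => a * Real.exp (l * c) with hg
  have hLne : L.Nonempty := hLi.mono interior_subset
  have hf0 : f 0 = a := by
    simp only [hf, sub_zero, one_smul, Set.zero_smul_set hLne]
    rw [add_zero]
  have hg0 : g 0 = a := by simp [hg]
  -- derivative of g at 0
  have hgd : HasDerivAt g (a * c) 0 := by
    have h1 : HasDerivAt (fun l : ℝ => l * c) c 0 := by
      simpa using (hasDerivAt_id (0:ℝ)).mul_const c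
    have h2 : HasDerivAt (fun l : ℝ => Real.exp (l * c)) (Real.exp (0 * c) * c) 0 := h1.exp
    have h3 := h2.const_mul a
    simpa [mul_comm, mul_assoc] using h3
  -- slope of g tends to a*c along 𝓝[>] 0
  have hgslope : Tendsto (slope g 0) (nhdsWithin 0 (Set.Ioi 0)) (nhds (a * c)) := by
    have := hasDerivAt_iff_tendsto_slope.mp hgd
    exact this.mono_left (nhdsWithin_mono _ (fun x hx => ne_of_gt hx))
  -- slope of f tends to D along 𝓝[>] 0
  have hfslope : Tendsto (slope f 0) (nhdsWithin 0 (Set.Ioi 0))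
      (nhds (mixm μ K L - mixm μ K K)) := by
    have := hasDerivWithinAt_iff_tendsto_slope.mp hderiv
    refine this.mono_left (nhdsWithin_mono _ ?_)
    intro x hx
    exact ⟨Set.mem_Ici.mpr (le_of_lt (Set.mem_Ioi.mp hx)), ne_of_gt hx⟩
  -- eventual inequality of slopes
  have hev : ∀ᶠ x in nhdsWithin 0 (Set.Ioi 0), slope g 0 x ≤ slope f 0 x := by
    have h1 : ∀ᶠ x in nhdsWithin (0:ℝ) (Set.Ioi 0), x < 1 :=
      eventually_nhdsWithin_of_eventually_nhds (eventually_lt_nhds one_pos)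
    filter_upwards [h1, self_mem_nhdsWithin] with x hx1 hx0
    have hx0' : (0:ℝ) < x := hx0
    have hkey : g x ≤ f x := by
      have h := hlc K L hK hL (hKi.mono interior_subset) hLne x ⟨hx0'.le, hx1.le⟩
      have hRfin : μ ((1 - x) • K + x • L) ≠ ⊤ := measure_ne_top μ _
      have h2 : (μ K ^ (1 - x) * μ L ^ x).toReal ≤ f x :=
        ENNReal.toReal_mono hRfin h
      have h3 : (μ K ^ (1 - x) * μ L ^ x).toReal = a ^ (1 - x) * b ^ x := by
        rw [ENNReal.toReal_mul, ← ENNReal.toReal_rpow, ← ENNReal.toReal_rpow]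
      have h4 : g x = a ^ (1 - x) * b ^ x := by
        have hba : (0:ℝ) < b / a := div_pos hb ha
        have : Real.exp (x * c) = (b / a) ^ x := by
          rw [hc', Real.rpow_def_of_pos hba, mul_comm]
        rw [hg]
        simp only [this]
        rw [Real.div_rpow hb.le ha.le, Real.rpow_sub ha]
        field_simp
        rw [Real.rpow_one]
      rw [h4]
      rw [h3] at h2
      exact h2
    rw [slope_def_field, slope_def_field, hf0, hg0, sub_zero]
    exact div_le_div_of_nonneg_right (sub_le_sub_right hkey a) hx0'.le
  exact le_of_tendsto_of_tendsto hgslope hfslope hev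
end

section
/- Let K, L be symmetric convex bodies in ℝⁿ with γₙ(K), γₙ(L) > 0, where γₙ is the standard Gaussian measure. Assume d/dλ γₙ((1−λ)K + λL)|_{λ=0⁺} = γₙ(K;L) − γₙ(K;K) with γₙ(K;M) := liminf_{ε→0⁺}(γₙ(K+εM) − γₙ(K))/ε, and assume the Gaussian Brunn–Minkowski inequality γₙ((1−λ)K + λL)^{1/n} ≥ (1−λ)γₙ(K)^{1/n} + λγₙ(L)^{1/n} holds (Eskenazis–Moschidis). Then γₙ(K;L) − γₙ(K;K) ≥ n·γₙ(L)^{1/n}·γₙ(K)^{(n−1)/n} − n·γₙ(K). -/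
/-! At `λ = 0` both sides of the Gaussian Brunn–Minkowski inequality equal `γ(K)^{1/n}`, so the
right derivative of the affine left side, `γ(L)^{1/n} - γ(K)^{1/n}`, is at most the right
derivative of `λ ↦ γ((1-λ)K + λL)^{1/n}`, which by the chain rule is
`(1/n) γ(K)^{1/n-1} (γ(K;L) - γ(K;K))`. Multiplying by `n γ(K)^{(n-1)/n}` gives the claim. -/

open Pointwise MeasureTheory Filter Set Topology

theorem HasDerivWithinAt.le_of_eventually_le_of_eq {f g : ℝ → ℝ} {f' g' a : ℝ}
    (hf : HasDerivWithinAt f f' (Ici a) a) (hg : HasDerivWithinAt g g' (Ici a) a)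
    (ha : f a = g a) (hle : ∀ᶠ x in 𝓝[>] a, g x ≤ f x) : g' ≤ f' := by
  have hslope {h : ℝ → ℝ} {h' : ℝ} (hh : HasDerivWithinAt h h' (Ici a) a) :
      Tendsto (slope h a) (𝓝[>] a) (𝓝 h') :=
    (hasDerivWithinAt_iff_tendsto_slope' (lt_irrefl a)).mp hh.Ioi_of_Ici
  refine le_of_tendsto_of_tendsto (hslope hg) (hslope hf) ?_
  filter_upwards [hle, self_mem_nhdsWithin] with x hx (hax : a < x)
  rw [slope_def_field, slope_def_field, ha]
  gcongr

theorem rpow_slope_le_of_linear_le_rpow {f : ℝ → ℝ} {f' c d p : ℝ} (hf0 : f 0 = c)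
    (hc : 0 < c) (hf : HasDerivWithinAt f f' (Ici 0) 0)
    (hlin : ∀ᶠ l in 𝓝[>] 0, (1 - l) * c ^ p + l * d ≤ f l ^ p) :
    d - c ^ p ≤ p * c ^ (p - 1) * f' := by
  subst hf0
  have hpow : HasDerivWithinAt (fun l => f l ^ p) (p * f 0 ^ (p - 1) * f') (Ici 0) 0 :=
    (Real.hasDerivAt_rpow_const (Or.inl hc.ne')).comp_hasDerivWithinAt 0 hf
  have hlinear : HasDerivAt (fun l : ℝ => (1 - l) * f 0 ^ p + l * d) (d - f 0 ^ p) 0 :=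
    ((((hasDerivAt_id' 0).const_sub 1).mul_const _).add
      ((hasDerivAt_id' 0).mul_const d)).congr_deriv (by ring)
  exact hpow.le_of_eventually_le_of_eq hlinear.hasDerivWithinAt (by simp) hlin

theorem div_le_of_sub_rpow_le_mul_rpow {c d p D : ℝ} (hc : 0 < c) (hp : 0 < p)
    (h : d - c ^ p ≤ p * c ^ (p - 1) * D) : (d * c ^ (1 - p) - c) / p ≤ D := by
  have hinv : c ^ (1 - p) * c ^ (p - 1) = 1 := by
    rw [← Real.rpow_add hc, show 1 - p + (p - 1) = 0 by ring, Real.rpow_zero]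
  have hc1 : c ^ (1 - p) * c ^ p = c := by
    rw [← Real.rpow_add hc, show 1 - p + p = 1 by ring, Real.rpow_one]
  rw [div_le_iff₀ hp]
  calc d * c ^ (1 - p) - c = c ^ (1 - p) * (d - c ^ p) := by rw [mul_sub, hc1, mul_comm]
    _ ≤ c ^ (1 - p) * (p * c ^ (p - 1) * D) := by gcongr
    _ = D * p := by linear_combination (p * D) * hinv

theorem Set.one_sub_zero_smul_add_zero_smul {R E : Type*} [Ring R] [AddCommGroup E]
    [Module R E] (K : Set E) {L : Set E} (hL : L.Nonempty) :
    (1 - (0:R)) • K + (0:R) • L = K := by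
  rw [sub_zero, one_smul, zero_smul_set hL, add_zero]

theorem stmt16_general {n : ℕ} (hn : 1 ≤ n) (γ : Measure (EuclideanSpace ℝ (Fin n)))
    (hγ : γ = volume.withDensity
      (fun x => ENNReal.ofReal ((2 * Real.pi) ^ (-(n:ℝ)/2) * Real.exp (-‖x‖^2/2))))
    (K L : Set (EuclideanSpace ℝ (Fin n)))
    (hK : IsCompact K) (hLi : (interior L).Nonempty)
    (hγK : 0 < γ K)
    (hGBM : ∀ l ∈ Set.Icc (0:ℝ) 1,
      (1-l) * (γ K).toReal ^ ((1:ℝ)/n) + l * (γ L).toReal ^ ((1:ℝ)/n) ≤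
        (γ ((1-l) • K + l • L)).toReal ^ ((1:ℝ)/n))
    (hderiv : HasDerivWithinAt (fun l : ℝ => (γ ((1-l) • K + l • L)).toReal)
      (mixm γ K L - mixm γ K K) (Set.Ici 0) 0) :
    (n:ℝ) * (γ L).toReal ^ ((1:ℝ)/n) * (γ K).toReal ^ (((n:ℝ)-1)/n)
        - n * (γ K).toReal ≤ mixm γ K L - mixm γ K K := by
  have hn0 : (0:ℝ) < n := by exact_mod_cast hn
  have hγK_fin : γ K < ⊤ := by
    have := IsLocallyFiniteMeasure.withDensity_ofReal (μ := volume)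
      (f := fun x : EuclideanSpace ℝ (Fin n) =>
        (2 * Real.pi) ^ (-(n:ℝ)/2) * Real.exp (-‖x‖^2/2)) (by fun_prop)
    exact hγ ▸ hK.measure_lt_top
  have hc : 0 < (γ K).toReal := ENNReal.toReal_pos hγK.ne' hγK_fin.ne
  have hf0 : (γ ((1 - (0:ℝ)) • K + (0:ℝ) • L)).toReal = (γ K).toReal := by
    rw [Set.one_sub_zero_smul_add_zero_smul K (hLi.mono interior_subset)]
  have hlin : ∀ᶠ l in 𝓝[>] (0:ℝ), (1 - l) * (γ K).toReal ^ ((1:ℝ)/n)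
      + l * (γ L).toReal ^ ((1:ℝ)/n) ≤ (γ ((1 - l) • K + l • L)).toReal ^ ((1:ℝ)/n) := by
    filter_upwards [Ioo_mem_nhdsGT (zero_lt_one' ℝ)] with l hl
    exact hGBM l ⟨hl.1.le, hl.2.le⟩
  have key := div_le_of_sub_rpow_le_mul_rpow hc (one_div_pos.mpr hn0)
    (rpow_slope_le_of_linear_le_rpow hf0 hc hderiv hlin)
  convert key using 1
  rw [show ((n:ℝ) - 1) / n = 1 - 1 / n by field_simp]
  field_simp

theorem stmt16 {n : ℕ} (hn : 1 ≤ n) (γ : Measure (EuclideanSpace ℝ (Fin n)))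
    (hγ : γ = volume.withDensity
      (fun x => ENNReal.ofReal ((2 * Real.pi) ^ (-(n:ℝ)/2) * Real.exp (-‖x‖^2/2))))
    (K L : Set (EuclideanSpace ℝ (Fin n)))
    (hK : IsCompact K) (hKc : Convex ℝ K) (hKi : (interior K).Nonempty) (hKs : K = -K)
    (hL : IsCompact L) (hLc : Convex ℝ L) (hLi : (interior L).Nonempty) (hLs : L = -L)
    (hγK : 0 < γ K) (hγL : 0 < γ L)
    (hGBM : ∀ l ∈ Set.Icc (0:ℝ) 1,
      (1-l) * (γ K).toReal ^ ((1:ℝ)/n) + l * (γ L).toReal ^ ((1:ℝ)/n) ≤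
        (γ ((1-l) • K + l • L)).toReal ^ ((1:ℝ)/n))
    (hderiv : HasDerivWithinAt (fun l : ℝ => (γ ((1-l) • K + l • L)).toReal)
      (mixm γ K L - mixm γ K K) (Set.Ici 0) 0) :
    (n:ℝ) * (γ L).toReal ^ ((1:ℝ)/n) * (γ K).toReal ^ (((n:ℝ)-1)/n)
        - n * (γ K).toReal ≤ mixm γ K L - mixm γ K K :=
  stmt16_general hn γ hγ K L hK hLi hγK hGBM hderiv
end

section
/- Let μ be a measure on ℝⁿ with radially non-increasing density φ (i.e., φ(tx) ≥ φ(x) for all t ∈ [0,1] and x ∈ ℝⁿ), and let K be a C²₊ convex body containing the origin in its interior. Then n·μ(K) ≥ μ(K; K), where μ(K;K) := lim_{ε→0⁺}(μ(K + εK) − μ(K))/ε = ∫_{S^{n−1}} h_K(u) φ(n_K^{−1}(u)) f_K(u) du. -/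
/-! Since `K` is convex, `K + ε • K = (1 + ε) • K`. The substitution `x = (1 + ε) • y` and
`φ ((1 + ε) • y) ≤ φ y` give `μ ((1 + ε) • K) ≤ (1 + ε) ^ n * μ K`, so the difference quotient
is at most `((1 + ε) ^ n - 1) / ε * μ K`, which tends to `n * μ K`. -/

open Pointwise MeasureTheory Filter Set Module Topology

section Dilation

variable {E : Type*} [NormedAddCommGroup E] [NormedSpace ℝ E] [MeasurableSpace E] [BorelSpace E]
  [FiniteDimensional ℝ E] (μ : Measure E) [μ.IsAddHaarMeasure]

theorem setLIntegral_smul_set {f : E → ENNReal} (hf : Measurable f) {s : Set E}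
    (hs : MeasurableSet s) {c : ℝ} (hc : 0 < c) :
    ∫⁻ x in c • s, f x ∂μ = ENNReal.ofReal (c ^ finrank ℝ E) * ∫⁻ x in s, f (c • x) ∂μ := by
  have hμ : μ = ENNReal.ofReal (c ^ finrank ℝ E) • μ.map (c • ·) := by
    rw [Measure.map_addHaar_smul μ hc.ne', smul_smul, ← ENNReal.ofReal_mul (by positivity),
      abs_of_pos (by positivity), mul_inv_cancel₀ (by positivity), ENNReal.ofReal_one, one_smul]
  conv_lhs => rw [hμ]
  rw [Measure.restrict_smul, lintegral_smul_measure,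
    setLIntegral_map (hs.const_smul₀ c) hf (measurable_const_smul c), preimage_smul₀ hc.ne',
    inv_smul_smul₀ hc.ne', smul_eq_mul]

theorem withDensity_smul_set_le {f : E → ENNReal} (hf : Measurable f) {s : Set E}
    (hs : MeasurableSet s) {c : ℝ} (hc : 0 < c) (hfc : ∀ x, f (c • x) ≤ f x) :
    μ.withDensity f (c • s) ≤ ENNReal.ofReal (c ^ finrank ℝ E) * μ.withDensity f s := by
  rw [withDensity_apply _ (hs.const_smul₀ c), withDensity_apply _ hs,
    setLIntegral_smul_set μ hf hs hc]
  gcongr with x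
  exact hfc x

end Dilation

theorem tendsto_one_add_pow_sub_one_div (n : ℕ) :
    Tendsto (fun ε : ℝ => ((1 + ε) ^ n - 1) / ε) (𝓝[>] 0) (𝓝 n) := by
  have h : HasDerivAt (fun x : ℝ => (1 + x) ^ n) n 0 := by
    simpa using (hasDerivAt_pow n (1 + 0 : ℝ)).comp_const_add 1 0
  simpa [div_eq_inv_mul] using h.tendsto_slope_zero_right

theorem stmt19_general {n : ℕ} (φ : EuclideanSpace ℝ (Fin n) → ℝ)
    (hφc : Continuous φ)
    (hrad : ∀ t : ℝ, t ∈ Set.Icc (0:ℝ) 1 → ∀ x, φ x ≤ φ (t • x))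
    (μ : Measure (EuclideanSpace ℝ (Fin n)))
    (hμ : μ = volume.withDensity (fun x => ENNReal.ofReal (φ x)))
    (K : Set (EuclideanSpace ℝ (Fin n)))
    (hK : IsCompact K) (hKc : Convex ℝ K)
    (m : ℝ)
    (hlim : Tendsto (fun ε : ℝ => ((μ (K + ε • K)).toReal - (μ K).toReal) / ε)
      (nhdsWithin 0 (Set.Ioi 0)) (nhds m)) :
    m ≤ n * (μ K).toReal := by
  have : IsLocallyFiniteMeasure μ := hμ ▸ .withDensity_ofReal hφc
  have hdilate (ε : ℝ) (hε : 0 < ε) : (μ (K + ε • K)).toReal ≤ (1 + ε) ^ n * (μ K).toReal := by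
    have hφ_dilate (x : EuclideanSpace ℝ (Fin n)) : φ ((1 + ε) • x) ≤ φ x := by
      simpa [smul_smul, inv_mul_cancel₀ (by positivity : (1 + ε) ≠ 0)] using
        hrad (1 + ε)⁻¹ ⟨by positivity, inv_le_one_of_one_le₀ (by linarith)⟩ ((1 + ε) • x)
    have h := withDensity_smul_set_le volume hφc.measurable.ennreal_ofReal hK.measurableSet
      (by positivity) fun x => ENNReal.ofReal_le_ofReal (hφ_dilate x)
    rw [finrank_euclideanSpace_fin, ← hμ] at h
    have hK_add : K + ε • K = (1 + ε) • K := by rw [hKc.add_smul zero_le_one hε.le, one_smul]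
    rw [hK_add]
    calc (μ ((1 + ε) • K)).toReal
        ≤ (ENNReal.ofReal ((1 + ε) ^ n) * μ K).toReal :=
          ENNReal.toReal_mono (by finiteness [hK.measure_lt_top (μ := μ)]) h
      _ = (1 + ε) ^ n * (μ K).toReal := by
          rw [ENNReal.toReal_mul, ENNReal.toReal_ofReal (by positivity)]
  refine le_of_tendsto_of_tendsto hlim ((tendsto_one_add_pow_sub_one_div n).mul_const _) ?_
  filter_upwards [self_mem_nhdsWithin] with ε hε
  rw [div_mul_eq_mul_div]
  exact div_le_div_of_nonneg_right (by linarith [hdilate ε hε]) (le_of_lt hε)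

theorem stmt19 {n : ℕ} (φ : EuclideanSpace ℝ (Fin n) → ℝ)
    (hφc : Continuous φ) (hφ0 : ∀ x, 0 ≤ φ x)
    (hrad : ∀ t : ℝ, t ∈ Set.Icc (0:ℝ) 1 → ∀ x, φ x ≤ φ (t • x))
    (μ : Measure (EuclideanSpace ℝ (Fin n)))
    (hμ : μ = volume.withDensity (fun x => ENNReal.ofReal (φ x)))
    (K : Set (EuclideanSpace ℝ (Fin n)))
    (hK : IsCompact K) (hKc : Convex ℝ K) (h0 : 0 ∈ interior K)
    (m : ℝ)
    (hlim : Tendsto (fun ε : ℝ => ((μ (K + ε • K)).toReal - (μ K).toReal) / ε)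
      (nhdsWithin 0 (Set.Ioi 0)) (nhds m)) :
    m ≤ n * (μ K).toReal :=
  stmt19_general φ hφc hrad μ hμ K hK hKc m hlim
end
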